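/- (Piola transformation preserves divergence.) Let Ω̂, Ω ⊆ ℝ^d be open sets and F : Ω̂ → Ω a C² diffeomorphism with everywhere invertible derivative DF. Let v̂ : Ω̂ → ℝ^d be a C¹ vector field and define v : Ω → ℝ^d by v(F(ξ)) = det(DF(ξ))⁻¹ · DF(ξ) · v̂(ξ) for all ξ ∈ Ω̂ (the Piola push-forward of v̂). Then for every ξ ∈ Ω̂, (∇·v)(F(ξ)) = det(DF(ξ))⁻¹ · (∇·v̂)(ξ). Equivalently, the divergence-preserving pullback ι_u(v) = det(DF) (DF)⁻¹ (v∘F) and the integral-preserving pullback ι_p(q) = det(DF) (q∘F) satisfy ι_p(∇·v) = ∇·(ι_u(v)). -/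

import Mathlib

/-!
Fix `ξ` and write `A = DF ξ`, `B = D²F ξ` (symmetric), `δ = det DF` and `u = δ⁻¹ • DF v̂`, so that
`v ∘ F = u` near `ξ` and, by the inverse function theorem, `Dv (F ξ) = Du ξ ∘ A⁻¹`. The product rule
gives `Du ξ h = δ⁻¹ (A (Dv̂ h) + B h v̂) - δ⁻² Dδ(h) • A v̂`. Taking the trace after composing with
`A⁻¹`, and using the symmetry of `B` to replace `h ↦ B h v̂` by `B v̂`,
`tr Dv (F ξ) = δ⁻¹ (tr Dv̂ + tr (A⁻¹ B v̂)) - δ⁻² Dδ(v̂)`.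
By Jacobi's formula `Dδ(v̂) = δ tr (A⁻¹ B v̂)`, so the last two terms cancel.
-/

/-- Divergence `∇·w = Σᵢ ∂wᵢ/∂xᵢ` of a vector field `w` on `ℝᵈ`. -/
noncomputable def vectorDivergence {d : ℕ} (w : (Fin d → ℝ) → (Fin d → ℝ))
    (x : Fin d → ℝ) : ℝ :=
  ∑ i, fderiv ℝ w x (Pi.single i 1) i

open Topology

theorem LinearMap.hasDerivAt_det_one_add_smul {𝕜 E : Type*} [NontriviallyNormedField 𝕜]
    [AddCommGroup E] [Module 𝕜 E] [FiniteDimensional 𝕜 E] (M : E →ₗ[𝕜] E) :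
    HasDerivAt (fun t : 𝕜 => LinearMap.det (1 + t • M)) (LinearMap.trace 𝕜 E M) 0 := by
  let b := Module.finBasis 𝕜 E
  let p : Polynomial 𝕜 :=
    (1 + (Polynomial.X : Polynomial 𝕜) • (LinearMap.toMatrix b b M).map Polynomial.C).det
  have hp : (fun t : 𝕜 => LinearMap.det (1 + t • M)) = fun t => p.eval t := by
    funext t
    rw [← LinearMap.det_toMatrix b]
    simp [p, eval_det, ← Matrix.smul_eq_mul_diagonal]
  rw [hp, LinearMap.trace_eq_matrix_trace 𝕜 b, ← Matrix.derivative_det_one_add_X_smul]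
  exact p.hasDerivAt 0

namespace ContinuousLinearMap

section Trace

variable {𝕜 E F : Type*} [NontriviallyNormedField 𝕜] [NormedAddCommGroup E] [NormedSpace 𝕜 E]
  [NormedAddCommGroup F] [NormedSpace 𝕜 F]

theorem trace_comp_comm [FiniteDimensional 𝕜 E] [FiniteDimensional 𝕜 F]
    (f : E →L[𝕜] F) (g : F →L[𝕜] E) :
    LinearMap.trace 𝕜 E (g ∘L f) = LinearMap.trace 𝕜 F (f ∘L g) := by
  rw [toLinearMap_comp, LinearMap.trace_comp_comm', ← toLinearMap_comp]

theorem trace_smulRight_comp [FiniteDimensional 𝕜 F] (φ : E →L[𝕜] 𝕜) (x : F) (T : F →L[𝕜] E) :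
    LinearMap.trace 𝕜 F (φ.smulRight x ∘L T) = φ (T x) := by
  have hrank_one :
      (φ.smulRight x ∘L T : F →ₗ[𝕜] F) = LinearMap.smulRight (φ ∘L T : F →ₗ[𝕜] 𝕜) x := by
    ext
    simp
  rw [hrank_one, LinearMap.trace_smulRight]
  rfl

end Trace

section Det

variable {𝕜 E : Type*} [NontriviallyNormedField 𝕜] [CompleteSpace 𝕜]
  [NormedAddCommGroup E] [NormedSpace 𝕜 E] [FiniteDimensional 𝕜 E]

theorem contDiff_det {n : WithTop ℕ∞} : ContDiff 𝕜 n (fun L : E →L[𝕜] E => L.det) := by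
  let b := Module.finBasis 𝕜 E
  have hentry : ∀ i j, ContDiff 𝕜 n (fun L : E →L[𝕜] E => b.coord i (L (b j))) := fun i j =>
    ((LinearMap.toContinuousLinearMap (b.coord i)).comp (apply 𝕜 E (b j))).contDiff
  have hdet : (fun L : E →L[𝕜] E => L.det) = fun L =>
      ∑ σ : Equiv.Perm _, (Equiv.Perm.sign σ : 𝕜) * ∏ i, b.coord (σ i) (L (b i)) := by
    funext L
    rw [det, ← LinearMap.det_toMatrix b, Matrix.det_apply]
    simp [LinearMap.toMatrix_apply, Units.smul_def]
  rw [hdet]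
  exact ContDiff.sum fun σ _ => contDiff_const.mul (contDiff_prod fun i _ => hentry _ _)

theorem fderiv_det_apply (A : E ≃L[𝕜] E) (H : E →L[𝕜] E) :
    fderiv 𝕜 (fun L : E →L[𝕜] E => L.det) A H
      = (A : E →L[𝕜] E).det * LinearMap.trace 𝕜 E ((A.symm : E →L[𝕜] E) ∘L H) := by
  have hline : HasDerivAt (fun t : 𝕜 => (A : E →L[𝕜] E) + t • H) H 0 := by
    simpa using ((hasDerivAt_id (0 : 𝕜)).smul_const H).const_add (A : E →L[𝕜] E)
  have hchain := ((contDiff_det (n := 1)).differentiable one_ne_zero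
    (A : E →L[𝕜] E)).hasFDerivAt.comp_hasDerivAt_of_eq 0 hline (by simp)
  have hfactor : (fun t : 𝕜 => ((A : E →L[𝕜] E) + t • H).det) = fun t =>
      (A : E →L[𝕜] E).det * LinearMap.det (1 + t • ((A.symm : E →L[𝕜] E) ∘L H : E →ₗ[𝕜] E)) := by
    funext t
    rw [det, ← LinearMap.det_comp]
    congr 1
    ext x
    simp
  have hjacobi := (LinearMap.hasDerivAt_det_one_add_smul
    ((A.symm : E →L[𝕜] E) ∘L H : E →ₗ[𝕜] E)).const_mul (A : E →L[𝕜] E).det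
  rw [← hfactor] at hjacobi
  exact hchain.unique hjacobi

end Det

end ContinuousLinearMap

theorem HasStrictFDerivAt.hasFDerivAt_of_comp_eventuallyEq {𝕜 E E' G : Type*}
    [NontriviallyNormedField 𝕜] [NormedAddCommGroup E] [NormedSpace 𝕜 E] [CompleteSpace E]
    [NormedAddCommGroup E'] [NormedSpace 𝕜 E'] [NormedAddCommGroup G] [NormedSpace 𝕜 G]
    {F : E → E'} {A : E ≃L[𝕜] E'} {ξ : E} (hF : HasStrictFDerivAt F (A : E →L[𝕜] E') ξ)
    {u : E → G} {u' : E →L[𝕜] G} (hu : HasFDerivAt u u' ξ) {v : E' → G}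
    (hvu : ∀ᶠ η in 𝓝 ξ, v (F η) = u η) :
    HasFDerivAt v (u' ∘L (A.symm : E' →L[𝕜] E)) (F ξ) := by
  rw [← hF.localInverse_apply_image] at hu
  refine (hu.comp (F ξ) hF.to_localInverse.hasFDerivAt).congr_of_eventuallyEq ?_
  filter_upwards [hF.eventually_right_inverse, hF.localInverse_tendsto.eventually hvu]
    with y hy hvy
  rw [Function.comp_apply, ← hvy, hy]

section Piola

variable {𝕜 E : Type*} [NormedAddCommGroup E]

/-- The Piola push-forward of `w` along `F`, read at reference points: the push-forward `v`
satisfies `v ∘ F = piolaPushforward 𝕜 F w`. -/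
noncomputable def piolaPushforward (𝕜 : Type*) [NontriviallyNormedField 𝕜] [NormedSpace 𝕜 E]
    (F w : E → E) (η : E) : E :=
  (fderiv 𝕜 F η).det⁻¹ • fderiv 𝕜 F η (w η)

theorem hasFDerivAt_piolaPushforward [NontriviallyNormedField 𝕜] [CompleteSpace 𝕜]
    [NormedSpace 𝕜 E] [FiniteDimensional 𝕜 E] {F w : E → E} {ξ : E}
    (hF : DifferentiableAt 𝕜 (fderiv 𝕜 F) ξ) (hdet : (fderiv 𝕜 F ξ).det ≠ 0)
    (hw : DifferentiableAt 𝕜 w ξ) :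
    HasFDerivAt (piolaPushforward 𝕜 F w)
      ((fderiv 𝕜 F ξ).det⁻¹ • (fderiv 𝕜 F ξ ∘L fderiv 𝕜 w ξ + (fderiv 𝕜 (fderiv 𝕜 F) ξ).flip (w ξ))
        + (-((fderiv 𝕜 F ξ).det ^ 2)⁻¹ • (fderiv 𝕜 (fun L : E →L[𝕜] E => L.det) (fderiv 𝕜 F ξ)
          ∘L fderiv 𝕜 (fderiv 𝕜 F) ξ)).smulRight (fderiv 𝕜 F ξ (w ξ))) ξ := by
  have hdet_deriv : HasFDerivAt (fun η => (fderiv 𝕜 F η).det)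
      (fderiv 𝕜 (fun L : E →L[𝕜] E => L.det) (fderiv 𝕜 F ξ) ∘L fderiv 𝕜 (fderiv 𝕜 F) ξ) ξ :=
    ((ContinuousLinearMap.contDiff_det (n := 1)).differentiable one_ne_zero
      _).hasFDerivAt.comp ξ hF.hasFDerivAt
  exact ((hasDerivAt_inv hdet).comp_hasFDerivAt ξ hdet_deriv).smul
    (hF.hasFDerivAt.clm_apply hw.hasFDerivAt)

theorem trace_fderiv_piolaPushforward_comp_symm [RCLike 𝕜] [NormedSpace 𝕜 E]
    [FiniteDimensional 𝕜 E] {F w : E → E} {ξ : E} (hF : ContDiffAt 𝕜 2 F ξ)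
    (hw : DifferentiableAt 𝕜 w ξ) (A : E ≃L[𝕜] E) (hA : (A : E →L[𝕜] E) = fderiv 𝕜 F ξ) :
    LinearMap.trace 𝕜 E (fderiv 𝕜 (piolaPushforward 𝕜 F w) ξ ∘L (A.symm : E →L[𝕜] E))
      = (A : E →L[𝕜] E).det⁻¹ * LinearMap.trace 𝕜 E (fderiv 𝕜 w ξ) := by
  have hdetA : (A : E →L[𝕜] E).det ≠ 0 := A.toLinearEquiv.isUnit_det'.ne_zero
  have hu := hasFDerivAt_piolaPushforward
    ((hF.fderiv_right (m := 1) le_rfl).differentiableAt one_ne_zero) (hA ▸ hdetA) hw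
  rw [← hA] at hu
  set B := fderiv 𝕜 (fderiv 𝕜 F) ξ
  set T : E →L[𝕜] E := (A.symm : E →L[𝕜] E)
  have hconj : LinearMap.trace 𝕜 E (((A : E →L[𝕜] E) ∘L fderiv 𝕜 w ξ) ∘L T)
      = LinearMap.trace 𝕜 E (fderiv 𝕜 w ξ) := by
    rw [ContinuousLinearMap.trace_comp_comm, ← ContinuousLinearMap.comp_assoc,
      A.coe_symm_comp_coe, ContinuousLinearMap.id_comp]
  have hflip : LinearMap.trace 𝕜 E (B.flip (w ξ) ∘L T) = LinearMap.trace 𝕜 E (T ∘L B (w ξ)) := by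
    have hsymm : B.flip (w ξ) = B (w ξ) := ContinuousLinearMap.ext fun x =>
      hF.isSymmSndFDerivAt (by simp [minSmoothness_of_isRCLikeNormedField]) x (w ξ)
    rw [hsymm, ContinuousLinearMap.trace_comp_comm]
  rw [hu.fderiv]
  simp only [ContinuousLinearMap.add_comp, ContinuousLinearMap.smul_comp,
    ContinuousLinearMap.toLinearMap_add, ContinuousLinearMap.toLinearMap_smul, map_add, map_smul,
    ContinuousLinearMap.trace_smulRight_comp]
  rw [hconj, hflip, show T ((A : E →L[𝕜] E) (w ξ)) = w ξ from A.symm_apply_apply (w ξ), smul_apply,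
    ContinuousLinearMap.comp_apply, ContinuousLinearMap.fderiv_det_apply, smul_eq_mul, smul_eq_mul]
  field_simp
  ring

theorem trace_fderiv_eq_of_comp_eq_piolaPushforward [RCLike 𝕜] [NormedSpace 𝕜 E]
    [FiniteDimensional 𝕜 E] {F w v : E → E} {ξ : E} (hF : ContDiffAt 𝕜 2 F ξ)
    (hdet : (fderiv 𝕜 F ξ).det ≠ 0) (hw : DifferentiableAt 𝕜 w ξ)
    (hv : ∀ᶠ η in 𝓝 ξ, v (F η) = piolaPushforward 𝕜 F w η) :
    LinearMap.trace 𝕜 E (fderiv 𝕜 v (F ξ))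
      = (fderiv 𝕜 F ξ).det⁻¹ * LinearMap.trace 𝕜 E (fderiv 𝕜 w ξ) := by
  let A : E ≃L[𝕜] E := (LinearMap.equivOfDetNeZero _ hdet).toContinuousLinearEquiv
  have hA : (A : E →L[𝕜] E) = fderiv 𝕜 F ξ := rfl
  have hu : HasFDerivAt (piolaPushforward 𝕜 F w) (fderiv 𝕜 (piolaPushforward 𝕜 F w) ξ) ξ :=
    (hasFDerivAt_piolaPushforward ((hF.fderiv_right (m := 1) le_rfl).differentiableAt one_ne_zero)
      hdet hw).differentiableAt.hasFDerivAt
  have hstrict : HasStrictFDerivAt F (A : E →L[𝕜] E) ξ := hF.hasStrictFDerivAt two_ne_zero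
  have : CompleteSpace E := FiniteDimensional.complete 𝕜 E
  rw [(hstrict.hasFDerivAt_of_comp_eventuallyEq hu hv).fderiv,
    trace_fderiv_piolaPushforward_comp_symm hF hw A hA, hA]

end Piola

theorem vectorDivergence_eq_trace {d : ℕ} (w : (Fin d → ℝ) → (Fin d → ℝ)) (x : Fin d → ℝ) :
    vectorDivergence w x = LinearMap.trace ℝ (Fin d → ℝ) (fderiv ℝ w x) := by
  rw [LinearMap.trace_eq_matrix_trace ℝ (Pi.basisFun ℝ (Fin d)), Matrix.trace]
  simp [vectorDivergence]

theorem piola_preserves_divergence_general {d : ℕ} (Ωp : Set (Fin d → ℝ))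
    (hΩp : IsOpen Ωp)
    (F : (Fin d → ℝ) → (Fin d → ℝ))
    (hF : ContDiffOn ℝ 2 F Ωp)
    (hdet : ∀ ξ ∈ Ωp, LinearMap.det ((fderiv ℝ F ξ : (Fin d → ℝ) →L[ℝ] (Fin d → ℝ)) :
      (Fin d → ℝ) →ₗ[ℝ] (Fin d → ℝ)) ≠ 0)
    (vh v : (Fin d → ℝ) → (Fin d → ℝ))
    (hvh : ContDiffOn ℝ 1 vh Ωp)
    (hv : ∀ ξ ∈ Ωp, v (F ξ) =
      (LinearMap.det ((fderiv ℝ F ξ : (Fin d → ℝ) →L[ℝ] (Fin d → ℝ)) :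
        (Fin d → ℝ) →ₗ[ℝ] (Fin d → ℝ)))⁻¹ • fderiv ℝ F ξ (vh ξ)) :
    ∀ ξ ∈ Ωp, vectorDivergence v (F ξ) =
      (LinearMap.det ((fderiv ℝ F ξ : (Fin d → ℝ) →L[ℝ] (Fin d → ℝ)) :
        (Fin d → ℝ) →ₗ[ℝ] (Fin d → ℝ)))⁻¹ * vectorDivergence vh ξ := by
  intro ξ hξ
  have hnhds : Ωp ∈ 𝓝 ξ := hΩp.mem_nhds hξ
  rw [vectorDivergence_eq_trace, vectorDivergence_eq_trace]
  exact trace_fderiv_eq_of_comp_eq_piolaPushforward (hF.contDiffAt hnhds) (hdet ξ hξ)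
    ((hvh.contDiffAt hnhds).differentiableAt one_ne_zero)
    (Filter.eventually_of_mem hnhds hv)

/-- **Piola transformation preserves divergence.** If `F : Ω̂ → Ω` is a C²
diffeomorphism with everywhere invertible derivative and `v` is the Piola push-forward
of a C¹ vector field `v̂`, i.e. `v(F ξ) = det(DF ξ)⁻¹ • DF ξ (v̂ ξ)`, then
`(∇·v)(F ξ) = det(DF ξ)⁻¹ (∇·v̂)(ξ)` for all `ξ ∈ Ω̂`. -/
theorem piola_preserves_divergence {d : ℕ} (Ωp Ω : Set (Fin d → ℝ))
    (hΩp : IsOpen Ωp) (hΩ : IsOpen Ω)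
    (F : (Fin d → ℝ) → (Fin d → ℝ))
    (hF : ContDiffOn ℝ 2 F Ωp)
    (hbij : Set.BijOn F Ωp Ω)
    (hdet : ∀ ξ ∈ Ωp, LinearMap.det ((fderiv ℝ F ξ : (Fin d → ℝ) →L[ℝ] (Fin d → ℝ)) :
      (Fin d → ℝ) →ₗ[ℝ] (Fin d → ℝ)) ≠ 0)
    (vh v : (Fin d → ℝ) → (Fin d → ℝ))
    (hvh : ContDiffOn ℝ 1 vh Ωp)
    (hv : ∀ ξ ∈ Ωp, v (F ξ) =
      (LinearMap.det ((fderiv ℝ F ξ : (Fin d → ℝ) →L[ℝ] (Fin d → ℝ)) :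
        (Fin d → ℝ) →ₗ[ℝ] (Fin d → ℝ)))⁻¹ • fderiv ℝ F ξ (vh ξ)) :
    ∀ ξ ∈ Ωp, vectorDivergence v (F ξ) =
      (LinearMap.det ((fderiv ℝ F ξ : (Fin d → ℝ) →L[ℝ] (Fin d → ℝ)) :
        (Fin d → ℝ) →ₗ[ℝ] (Fin d → ℝ)))⁻¹ * vectorDivergence vh ξ :=
  piola_preserves_divergence_general Ωp hΩp F hF hdet vh v hvh hv
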